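/- Let H be a Hermitian N×N complex matrix, let U be a unitary matrix such that U H U† is diagonal, and let F be a complex Hadamard matrix of order N. Then the matrix A = (F U) H (F U)† is contradiagonal: every diagonal entry of A equals (Tr H)/N. -/

import Mathlib

/-!
With `D = U H Uᴴ` diagonal, `A = F D Fᴴ`, so `A i i = ∑ k, |F i k|² D k k`. When every entry of
row `i` has modulus `1/√N` this is `Tr D / N`, and `Tr D = Tr H` since `U` is unitary.
-/

open Matrix

namespace Matrix

variable {m n 𝕜 : Type*} [Fintype n] [RCLike 𝕜]

theorem IsDiag.mul_mul_conjTranspose_apply_self {D : Matrix n n 𝕜} (hD : D.IsDiag)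
    (A : Matrix m n 𝕜) (i : m) :
    (A * D * Aᴴ) i i = ∑ k, (‖A i k‖ : 𝕜) ^ 2 * D k k := by
  rw [mul_apply]
  refine Finset.sum_congr rfl fun k _ => ?_
  have hrow : (A * D) i k = A i k * D k k := by
    rw [mul_apply]
    exact Finset.sum_eq_single k (fun j _ hjk => by rw [hD hjk, mul_zero])
      (fun hk => absurd (Finset.mem_univ k) hk)
  rw [hrow, conjTranspose_apply, mul_right_comm, RCLike.star_def, RCLike.mul_conj]

theorem IsDiag.mul_mul_conjTranspose_apply_self_of_norm_eq {D : Matrix n n 𝕜} (hD : D.IsDiag)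
    {A : Matrix m n 𝕜} {i : m} {c : ℝ} (hA : ∀ k, ‖A i k‖ = c) :
    (A * D * Aᴴ) i i = (c : 𝕜) ^ 2 * trace D := by
  simp only [hD.mul_mul_conjTranspose_apply_self, hA, trace, diag, Finset.mul_sum]

theorem trace_mul_mul_conjTranspose_of_mem_unitaryGroup [DecidableEq n] {U : Matrix n n 𝕜}
    (hU : U ∈ unitaryGroup n 𝕜) (H : Matrix n n 𝕜) : trace (U * H * Uᴴ) = trace H := by
  have hUU : Uᴴ * U = 1 := mem_unitaryGroup_iff'.mp hU
  rw [trace_mul_cycle, hUU, Matrix.one_mul]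

end Matrix

theorem hadamard_conjugate_contradiagonal (N : ℕ)
    (H U F : Matrix (Fin N) (Fin N) ℂ)
    (hU : U ∈ Matrix.unitaryGroup (Fin N) ℂ)
    (hUdiag : (U * H * Uᴴ).IsDiag)
    (hFmod : ∀ j k, ‖F j k‖ = 1 / Real.sqrt N) :
    ∀ i, ((F * U) * H * (F * U)ᴴ) i i = Matrix.trace H / N := by
  intro i
  have hconj : (F * U) * H * (F * U)ᴴ = F * (U * H * Uᴴ) * Fᴴ := by
    simp only [conjTranspose_mul, Matrix.mul_assoc]
  have hsq : ((1 / Real.sqrt N : ℝ) : ℂ) ^ 2 = 1 / N := by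
    rw [← Complex.ofReal_pow, div_pow, one_pow, Real.sq_sqrt N.cast_nonneg, Complex.ofReal_div,
      Complex.ofReal_one, Complex.ofReal_natCast]
  rw [hconj, hUdiag.mul_mul_conjTranspose_apply_self_of_norm_eq (hFmod i),
    trace_mul_mul_conjTranspose_of_mem_unitaryGroup hU]
  -- `exact`, not `rw [hsq]`: the lemma's coercion `ℝ → ℂ` is the `RCLike` one, equal to `hsq`'s only
  -- after unfolding
  exact (congrArg (· * trace H) hsq).trans (one_div_mul_eq_div _ _)
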